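/- arXiv:2504.16380 — 2 statements merged into one kernel-verified Lean document; each statement's English description precedes it below -/
import Mathlib

section
/- Let (X̃^n, Ỹ^n) have joint distribution P̃ on X^n × Y^n obtained by conditioning the i.i.d. distribution P_{XY}^n on an event C, and let J be uniform on {1,…,n} independent of everything else. Then D(P̃ ‖ P_{XY}^n) + H(X̃^n | Ỹ^n) ≥ n ( D(P_{X̃_J Ỹ_J} ‖ P_{XY}) + H(X̃_J | Ỹ_J) ), where P_{X̃_J Ỹ_J}(x,y) = (1/n) Σ_{j=1}^n P_{X̃_j Ỹ_j}(x,y). -/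
open Real Finset
open scoped Classical

noncomputable section

/-- Shannon entropy (base 2) of a pmf on a finite type. -/
def ent {S : Type*} [Fintype S] (p : S → ℝ) : ℝ :=
  - ∑ s, p s * Real.logb 2 (p s)

/-- Pushforward pmf under a map. -/
def push {S T : Type*} [Fintype S] [Fintype T] (p : S → ℝ) (f : S → T) : T → ℝ :=
  fun t => ∑ s, if f s = t then p s else 0

/-- Entropy of the random variable `f` under joint pmf `p`. -/
def entOf {S T : Type*} [Fintype S] [Fintype T] (p : S → ℝ) (f : S → T) : ℝ :=
  ent (push p f)

/-- Conditional entropy `H(f | g)` under joint pmf `p`. -/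
def condEnt {S T V : Type*} [Fintype S] [Fintype T] [Fintype V]
    (p : S → ℝ) (f : S → T) (g : S → V) : ℝ :=
  entOf p (fun s => (f s, g s)) - entOf p g

/-- Mutual information `I(f ∧ g)` under joint pmf `p`. -/
def miOf {S T V : Type*} [Fintype S] [Fintype T] [Fintype V]
    (p : S → ℝ) (f : S → T) (g : S → V) : ℝ :=
  entOf p f + entOf p g - entOf p (fun s => (f s, g s))

/-- Conditional mutual information `I(f ∧ g | h)` under joint pmf `p`. -/
def cmiOf {S T V W : Type*} [Fintype S] [Fintype T] [Fintype V] [Fintype W]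
    (p : S → ℝ) (f : S → T) (g : S → V) (h : S → W) : ℝ :=
  condEnt p f h + condEnt p g h - condEnt p (fun s => (f s, g s)) h

/-- Kullback–Leibler divergence (base 2). -/
def kl {S : Type*} [Fintype S] (p q : S → ℝ) : ℝ :=
  ∑ s, p s * Real.logb 2 (p s / q s)

end

/-!
`D(P̃ ‖ Pⁿ) + H(X̃ⁿ, Ỹⁿ)` is the cross entropy of `P̃` against the product `Pⁿ`, so it splits
into `n` single-letter cross entropies whose sum is also `n (D(P̄ ‖ P) + H(P̄))`. The two sides
therefore differ only by `H(Ỹⁿ)` versus `n H(Ȳ)`, and `H(Ỹⁿ) ≤ ∑ⱼ H(Ỹⱼ) ≤ n H(Ȳ)` by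
subadditivity and concavity of entropy.
-/

section Pushforward

variable {S T U : Type*} [Fintype S] [Fintype T] [Fintype U]

lemma push_nonneg {p : S → ℝ} (hp : ∀ s, 0 ≤ p s) (g : S → T) (t : T) :
    0 ≤ push p g t :=
  sum_nonneg fun s _ => by split_ifs <;> simp [hp s]

lemma sum_push_mul (p : S → ℝ) (g : S → T) (f : T → ℝ) :
    ∑ t, push p g t * f t = ∑ s, p s * f (g s) := by
  simp only [push, sum_mul, ite_mul, zero_mul]
  rw [sum_comm]
  simp

lemma sum_push (p : S → ℝ) (g : S → T) : ∑ t, push p g t = ∑ s, p s := by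
  simpa using sum_push_mul p g fun _ => 1

lemma push_push (p : S → ℝ) (g : S → T) (h : T → U) :
    push (push p g) h = push p (h ∘ g) := by
  funext u
  have := sum_push_mul p g fun t => if h t = u then (1 : ℝ) else 0
  simp only [mul_ite, mul_one, mul_zero] at this
  exact this

lemma push_id (p : S → ℝ) : push p (fun s => s) = p := by
  funext t
  simp [push]

lemma sum_push_prodMk (p : S → ℝ) (f : S → T) (g : S → U) (u : U) :
    ∑ t, push p (fun s => (f s, g s)) (t, u) = push p g u := by
  simp only [push, Prod.mk.injEq]
  rw [sum_comm]
  refine sum_congr rfl fun s _ => ?_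
  by_cases h : g s = u <;> simp [h]

lemma push_apply_eq_zero {p : S → ℝ} {g : S → T} {t : T} (h : ∀ s, g s = t → p s = 0) :
    push p g t = 0 :=
  sum_eq_zero fun s _ => by split_ifs with hs; exacts [h s hs, rfl]

lemma le_push_apply {p : S → ℝ} (hp : ∀ s, 0 ≤ p s) (g : S → T) (s : S) :
    p s ≤ push p g (g s) := by
  simpa [push] using single_le_sum (f := fun s' => if g s' = g s then p s' else 0)
    (fun s' _ => by split_ifs <;> simp [hp s']) (mem_univ s)

end Pushforward

section Entropy

variable {S T ι : Type*} [Fintype S] [Fintype T] [Fintype ι]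

lemma ent_eq_sum_negMulLog (p : S → ℝ) : ent p = (∑ s, negMulLog (p s)) / log 2 := by
  simp only [ent, negMulLog, logb, sum_div, ← sum_neg_distrib]
  exact sum_congr rfl fun s _ => by ring

lemma kl_add_ent {p q : S → ℝ} (hac : ∀ s, q s = 0 → p s = 0) :
    kl p q + ent p = -∑ s, p s * logb 2 (q s) := by
  rw [kl, ent, ← sub_eq_add_neg, ← sum_sub_distrib, ← sum_neg_distrib]
  refine sum_congr rfl fun s _ => ?_
  by_cases hp : p s = 0
  · simp [hp]
  · rw [logb_div hp fun hq => hp (hac s hq)]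
    ring

lemma sub_le_mul_log_div {x y : ℝ} (hx : 0 ≤ x) (hy : 0 ≤ y) (hac : y = 0 → x = 0) :
    x - y ≤ x * log (x / y) := by
  rcases hx.eq_or_lt with rfl | hx
  · simpa using hy
  have hy : 0 < y := hy.lt_of_ne' fun h => hx.ne' (hac h)
  calc x - y = x * (1 - (x / y)⁻¹) := by field_simp
    _ ≤ x * log (x / y) := by gcongr; exact one_sub_inv_le_log_of_pos (by positivity)

lemma kl_nonneg {p q : S → ℝ} (hp : ∀ s, 0 ≤ p s) (hq : ∀ s, 0 ≤ q s)
    (hac : ∀ s, q s = 0 → p s = 0) (hsum : ∑ s, q s ≤ ∑ s, p s) : 0 ≤ kl p q := by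
  have hlog : 0 ≤ ∑ s, p s * log (p s / q s) := calc
    0 ≤ ∑ s, (p s - q s) := by rw [sum_sub_distrib]; linarith
    _ ≤ _ := sum_le_sum fun s _ => sub_le_mul_log_div (hp s) (hq s) (hac s)
  have hkl : kl p q = (∑ s, p s * log (p s / q s)) / log 2 := by
    simp only [kl, logb, sum_div, mul_div_assoc]
  rw [hkl]
  positivity

lemma sum_mul_logb_prod (p : S → ℝ) (g : ι → S → T) (q : ι → T → ℝ)
    (hac : ∀ s j, q j (g j s) = 0 → p s = 0) :
    ∑ s, p s * logb 2 (∏ j, q j (g j s)) = ∑ j, ∑ t, push p (g j) t * logb 2 (q j t) := by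
  simp only [sum_push_mul]
  rw [sum_comm, ← sum_congr rfl fun s _ => mul_sum ..]
  refine sum_congr rfl fun s _ => ?_
  by_cases hp : p s = 0
  · simp [hp]
  · rw [logb_prod _ _ fun j _ hq => hp (hac s j hq)]

lemma ent_le_sum_ent_push_eval [DecidableEq ι] {p : (ι → T) → ℝ} (hp : ∀ t, 0 ≤ p t)
    (hp1 : ∑ t, p t = 1) : ent p ≤ ∑ j, ent (push p fun t => t j) := by
  set m : ι → T → ℝ := fun j => push p fun t => t j
  have hac : ∀ t j, m j (t j) = 0 → p t = 0 := fun t j h0 =>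
    le_antisymm (h0 ▸ le_push_apply hp (fun t => t j) t) (hp t)
  have hac_prod : ∀ t, ∏ j, m j (t j) = 0 → p t = 0 := fun t h0 => by
    obtain ⟨j, -, hj⟩ := prod_eq_zero_iff.mp h0
    exact hac t j hj
  have hprod : ∑ t : ι → T, ∏ j, m j (t j) = 1 := by
    simp [← Fintype.prod_sum, m, sum_push, hp1]
  have hkl := kl_nonneg hp (fun t => prod_nonneg fun j _ => push_nonneg hp _ _) hac_prod
    (by rw [hprod, hp1])
  have hcross : kl p (fun t => ∏ j, m j (t j)) + ent p = ∑ j, ent (m j) := by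
    rw [kl_add_ent hac_prod, sum_mul_logb_prod p (fun j (t : ι → T) => t j) m hac]
    simp only [ent, sum_neg_distrib, m]
  linarith

lemma entOf_le_sum_entOf_eval [DecidableEq ι] {p : S → ℝ} (hp : ∀ s, 0 ≤ p s)
    (hp1 : ∑ s, p s = 1) (g : S → ι → T) : entOf p g ≤ ∑ j, entOf p fun s => g s j := by
  simpa only [entOf, push_push, Function.comp_def] using
    ent_le_sum_ent_push_eval (push_nonneg hp g) (by rw [sum_push, hp1])

lemma sum_ent_le_card_mul_ent_avg {m : ι → T → ℝ} (hm : ∀ j t, 0 ≤ m j t) :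
    ∑ j, ent (m j) ≤ Fintype.card ι * ent fun t => (Fintype.card ι : ℝ)⁻¹ * ∑ j, m j t := by
  rcases isEmpty_or_nonempty ι with hι | hι
  · simp
  have hcard : (0 : ℝ) < Fintype.card ι := by exact_mod_cast Fintype.card_pos
  have hjensen (t : T) : ∑ j, negMulLog (m j t)
      ≤ Fintype.card ι * negMulLog ((Fintype.card ι : ℝ)⁻¹ * ∑ j, m j t) := by
    have := concaveOn_negMulLog.le_map_sum (t := univ) (w := fun _ => (Fintype.card ι : ℝ)⁻¹)
      (p := fun j => m j t) (fun _ _ => by positivity) (by simp [hcard.ne'])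
      (fun j _ => Set.mem_Ici.mpr (hm j t))
    simp only [smul_eq_mul, ← mul_sum] at this
    rwa [inv_mul_le_iff₀ hcard] at this
  simp only [ent_eq_sum_negMulLog]
  rw [← sum_div, mul_div_assoc', mul_sum, sum_comm]
  gcongr with t
  exact hjensen t

lemma condEnt_fst_snd (p : S × T → ℝ) :
    condEnt p (fun s => s.1) (fun s => s.2) = ent p - entOf p (fun s => s.2) := by
  rw [condEnt, entOf, entOf]
  congr 1
  exact congrArg ent (push_id p)

lemma card_mul_sum_avg_mul (m : ι → T → ℝ) (f : T → ℝ) :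
    (Fintype.card ι : ℝ) * ∑ t, ((Fintype.card ι : ℝ)⁻¹ * ∑ j, m j t) * f t
      = ∑ j, ∑ t, m j t * f t := by
  simp only [mul_assoc, sum_mul, ← mul_sum]
  rw [sum_comm, inv_mul_eq_div, ← Fintype.expect_eq_sum_div_card, Fintype.card_mul_expect]

end Entropy

theorem stmt3_general {X Y : Type*} [Fintype X] [Fintype Y] (n : ℕ)
    (PXY : X × Y → ℝ)
    (Pt : (Fin n → X) × (Fin n → Y) → ℝ) (hp : ∀ s, 0 ≤ Pt s) (hp1 : ∑ s, Pt s = 1)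
    (hac : ∀ s, (∏ j, PXY (s.1 j, s.2 j)) = 0 → Pt s = 0) :
    kl Pt (fun s => ∏ j, PXY (s.1 j, s.2 j))
        + condEnt Pt (fun s => s.1) (fun s => s.2)
      ≥ n * (kl (fun a : X × Y => (n : ℝ)⁻¹ * ∑ j, push Pt (fun s => (s.1 j, s.2 j)) a) PXY
          + (ent (fun a : X × Y => (n : ℝ)⁻¹ * ∑ j, push Pt (fun s => (s.1 j, s.2 j)) a)
              - ent (fun y : Y => (n : ℝ)⁻¹ * ∑ j, ∑ x : X, push Pt (fun s => (s.1 j, s.2 j)) (x, y)))) := by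
  set Pbar : X × Y → ℝ := fun a => (n : ℝ)⁻¹ * ∑ j, push Pt (fun s => (s.1 j, s.2 j)) a
  have hac' : ∀ s j, PXY (s.1 j, s.2 j) = 0 → Pt s = 0 := fun s j h0 =>
    hac s (prod_eq_zero (mem_univ j) h0)
  have hPbar_ac : ∀ a, PXY a = 0 → Pbar a = 0 := fun a ha => by
    have hPj (j : Fin n) : push Pt (fun s => (s.1 j, s.2 j)) a = 0 :=
      push_apply_eq_zero fun s hs => hac' s j (hs ▸ ha)
    simp [Pbar, hPj]
  have hcross : (n : ℝ) * ∑ a, Pbar a * logb 2 (PXY a)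
      = ∑ s, Pt s * logb 2 (∏ j, PXY (s.1 j, s.2 j)) := by
    rw [sum_mul_logb_prod Pt (fun j s => (s.1 j, s.2 j)) (fun _ => PXY) hac']
    simpa using card_mul_sum_avg_mul (fun j => push Pt fun s => (s.1 j, s.2 j))
      fun a => logb 2 (PXY a)
  have hent : entOf Pt (fun s => s.2)
      ≤ n * ent (fun y => (n : ℝ)⁻¹ * ∑ j, push Pt (fun s => s.2 j) y) := calc
    entOf Pt (fun s => s.2) ≤ ∑ j, entOf Pt fun s => s.2 j :=
      entOf_le_sum_entOf_eval hp hp1 _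
    _ ≤ _ := by
      simpa [entOf] using sum_ent_le_card_mul_ent_avg (m := fun j => push Pt fun s => s.2 j)
        fun j => push_nonneg hp _
  have hLHS := kl_add_ent hac
  have hRHS := kl_add_ent hPbar_ac
  simp only [sum_push_prodMk, condEnt_fst_snd, ge_iff_le]
  linear_combination hent + (n : ℝ) * hRHS - hLHS - hcross

theorem stmt3 {X Y : Type*} [Fintype X] [Fintype Y] (n : ℕ) (hn : 0 < n)
    (PXY : X × Y → ℝ) (hP : ∀ a, 0 ≤ PXY a) (hP1 : ∑ a, PXY a = 1)
    (Pt : (Fin n → X) × (Fin n → Y) → ℝ) (hp : ∀ s, 0 ≤ Pt s) (hp1 : ∑ s, Pt s = 1)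
    (hac : ∀ s, (∏ j, PXY (s.1 j, s.2 j)) = 0 → Pt s = 0) :
    kl Pt (fun s => ∏ j, PXY (s.1 j, s.2 j))
        + condEnt Pt (fun s => s.1) (fun s => s.2)
      ≥ n * (kl (fun a : X × Y => (n : ℝ)⁻¹ * ∑ j, push Pt (fun s => (s.1 j, s.2 j)) a) PXY
          + (ent (fun a : X × Y => (n : ℝ)⁻¹ * ∑ j, push Pt (fun s => (s.1 j, s.2 j)) a)
              - ent (fun y : Y => (n : ℝ)⁻¹ * ∑ j, ∑ x : X, push Pt (fun s => (s.1 j, s.2 j)) (x, y)))) :=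
  stmt3_general n PXY Pt hp hp1 hac
end

section
/- (Exponential matching lemma) Let P and Q be probability distributions on a finite set C, and let (Z_c)_{c∈C} be i.i.d. Exp(1) random variables. Define Č_P := argmin_{c: P(c)>0} Z_c / P(c) and Č_Q := argmin_{c: Q(c)>0} Z_c / Q(c). Then Č_P is distributed according to P, and for every c with P(c) > 0 and Q(c) > 0, ℙ( Č_P ≠ Č_Q | Č_P = c ) ≤ 1 − ( 1 + P(c)/Q(c) )^{-1}. -/
open Real Finset
open scoped Classical

/-!
Exponential races: if the `Z i` are i.i.d. `Exp(r)` and `a i ≥ 0`, conditioning on `Z c = t` gives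
`ℙ(∀ i ≠ c, a i * Z c < Z i) = ∫ r e^{-rt} ∏_{i ≠ c} e^{-r a_i t} dt = (1 + ∑_{i ≠ c} a i)⁻¹`.
With `a i = P i / P c` this is `P c`. The event `Č_P = Č_Q = c` is the race with
`a i = max (P i / P c) (Q i / Q c) ≤ P i / P c + Q i / Q c`, so it has probability at least
`(1 / P c + 1 / Q c)⁻¹ = P c * (1 + P c / Q c)⁻¹`, and it is disjoint from `Č_P ≠ Č_Q`.
-/

open MeasureTheory ProbabilityTheory Set
open scoped ENNReal

section PiSlice

variable {ι α : Type*} [Fintype ι] [MeasurableSpace α]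

lemma measure_pi_forall_ne_eq_lintegral (μ : ι → Measure α) [∀ i, SigmaFinite (μ i)]
    (c : ι) {R : ι → Set (α × α)} (hR : ∀ i, MeasurableSet (R i)) :
    Measure.pi μ {ω | ∀ i ≠ c, (ω c, ω i) ∈ R i}
      = ∫⁻ t, ∏ i ∈ univ.erase c, μ i (Prod.mk t ⁻¹' R i) ∂μ c := by
  let S : Set (({i // i = c} → α) × ({i // i ≠ c} → α)) :=
    {y | ∀ j : {i // i ≠ c}, (y.1 default, y.2 j) ∈ R j}
  have hS : MeasurableSet S := by
    simp only [S, ofPred_forall]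
    exact MeasurableSet.iInter fun j => measurableSet_preimage
      (((measurable_pi_apply _).comp measurable_fst).prodMk
        ((measurable_pi_apply _).comp measurable_snd)) (hR j)
  have hpre : {ω : ι → α | ∀ i ≠ c, (ω c, ω i) ∈ R i}
      = MeasurableEquiv.piEquivPiSubtypeProd (fun _ => α) (· = c) ⁻¹' S := by
    ext ω
    exact ⟨fun h j => h j j.2, fun h i hi => h ⟨i, hi⟩⟩
  have hslice (x : {i // i = c} → α) :
      Measure.pi (fun j : {i // i ≠ c} => μ j) (Prod.mk x ⁻¹' S)
        = ∏ i ∈ univ.erase c, μ i (Prod.mk (x default) ⁻¹' R i) := by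
    rw [show Prod.mk x ⁻¹' S = univ.pi fun j : {i // i ≠ c} => Prod.mk (x default) ⁻¹' R j
      by ext; simp [S], Measure.pi_pi]
    exact (Finset.prod_subtype (p := (· ≠ c)) (univ.erase c) (by simp)
      fun i => μ i (Prod.mk (x default) ⁻¹' R i)).symm
  have hmeas : Measurable fun t => ∏ i ∈ univ.erase c, μ i (Prod.mk t ⁻¹' R i) :=
    Finset.measurable_prod _ fun i _ => measurable_measure_prodMk_left (hR i)
  rw [hpre, (measurePreserving_piEquivPiSubtypeProd μ (· = c)).measure_preimage
    hS.nullMeasurableSet, Measure.prod_apply hS]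
  simp_rw [hslice]
  convert (measurePreserving_piUnique fun i : {i // i = c} => μ i).lintegral_comp hmeas using 2
  · congr!
  · rfl
  · rfl

end PiSlice

section Exponential

variable {r : ℝ}

lemma measurable_exponentialPDF (r : ℝ) : Measurable (exponentialPDF r) :=
  (measurable_exponentialPDFReal r).ennreal_ofReal

lemma expMeasure_eq_withDensity (r : ℝ) :
    expMeasure r = volume.withDensity (exponentialPDF r) := rfl

lemma expMeasure_Ioi (hr : 0 < r) {u : ℝ} (hu : 0 ≤ u) :
    expMeasure r (Ioi u) = ENNReal.ofReal (rexp (-(r * u))) := by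
  have := isProbabilityMeasure_expMeasure hr
  have hle : rexp (-(r * u)) ≤ 1 := Real.exp_le_one_iff.2 (by nlinarith)
  rw [← compl_Iic, prob_compl_eq_one_sub measurableSet_Iic, ← ofReal_cdf, cdf_expMeasure_eq hr,
    if_pos hu, ← ENNReal.ofReal_one, ← ENNReal.ofReal_sub _ (by linarith), sub_sub_cancel]

lemma ae_pos_expMeasure (r : ℝ) : ∀ᵐ t ∂expMeasure r, 0 < t := by
  rw [expMeasure_eq_withDensity, ae_withDensity_iff (measurable_exponentialPDF r)]
  filter_upwards [Measure.ae_ne volume 0] with t ht hpdf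
  exact ht.symm.lt_of_le (not_lt.1 fun h => hpdf (exponentialPDF_of_neg h))

lemma ae_pos_pi_expMeasure {ι : Type*} [Fintype ι] (hr : 0 < r) :
    ∀ᵐ ω ∂Measure.pi fun _ : ι => expMeasure r, ∀ i, 0 < ω i :=
  have := isProbabilityMeasure_expMeasure hr
  ae_all_iff.2 fun _ => Measure.tendsto_eval_ae_ae.eventually (ae_pos_expMeasure r)

lemma lintegral_exp_neg_mul_expMeasure (hr : 0 < r) {s : ℝ} (hs : 0 ≤ s) :
    ∫⁻ t, ENNReal.ofReal (rexp (-(r * s * t))) ∂expMeasure r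
      = ENNReal.ofReal (1 + s)⁻¹ := by
  have hrs : 0 < r * (1 + s) := by positivity
  have hpoint (t : ℝ) : exponentialPDF r t * ENNReal.ofReal (rexp (-(r * s * t)))
      = ENNReal.ofReal (1 + s)⁻¹ * exponentialPDF (r * (1 + s)) t := by
    rcases lt_or_ge t 0 with ht | ht
    · simp [exponentialPDF_of_neg ht]
    · rw [exponentialPDF_of_nonneg ht, exponentialPDF_of_nonneg ht,
        ← ENNReal.ofReal_mul (by positivity), ← ENNReal.ofReal_mul (by positivity)]
      congr 1
      rw [mul_assoc, ← Real.exp_add, show -(r * t) + -(r * s * t) = -(r * (1 + s) * t) by ring]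
      field_simp
  rw [expMeasure_eq_withDensity,
    lintegral_withDensity_eq_lintegral_mul _ (measurable_exponentialPDF r) (by fun_prop)]
  simp only [Pi.mul_apply, hpoint]
  rw [lintegral_const_mul _ (measurable_exponentialPDF _),
    lintegral_exponentialPDF_eq_one hrs, mul_one]

end Exponential

section Race

variable {ι : Type*} [Fintype ι]

lemma measurableSet_forall_ne_mul_lt (c : ι) (a : ι → ℝ) :
    MeasurableSet {ω : ι → ℝ | ∀ i ≠ c, a i * ω c < ω i} := by
  simp only [ofPred_forall]
  exact MeasurableSet.iInter fun i => MeasurableSet.iInter fun _ =>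
    measurableSet_lt (by fun_prop) (by fun_prop)

lemma measure_pi_expMeasure_forall_ne_mul_lt {r : ℝ} (hr : 0 < r) (c : ι) {a : ι → ℝ}
    (ha : ∀ i, 0 ≤ a i) :
    Measure.pi (fun _ : ι => expMeasure r) {ω | ∀ i ≠ c, a i * ω c < ω i}
      = ENNReal.ofReal (1 + ∑ i ∈ univ.erase c, a i)⁻¹ := by
  have := isProbabilityMeasure_expMeasure hr
  have hslice : ∀ᵐ t ∂expMeasure r,
      ∏ i ∈ univ.erase c, expMeasure r (Prod.mk t ⁻¹' {p : ℝ × ℝ | a i * p.1 < p.2})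
        = ENNReal.ofReal (rexp (-(r * (∑ i ∈ univ.erase c, a i) * t))) := by
    filter_upwards [ae_pos_expMeasure r] with t ht
    rw [Finset.mul_sum, Finset.sum_mul, ← Finset.sum_neg_distrib, Real.exp_sum,
      ENNReal.ofReal_prod_of_nonneg fun _ _ => (Real.exp_pos _).le]
    refine Finset.prod_congr rfl fun i _ => ?_
    rw [mul_assoc]
    exact expMeasure_Ioi hr (mul_nonneg (ha i) ht.le)
  rw [show {ω : ι → ℝ | ∀ i ≠ c, a i * ω c < ω i}
      = {ω | ∀ i ≠ c, (ω c, ω i) ∈ {p : ℝ × ℝ | a i * p.1 < p.2}} from rfl,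
    measure_pi_forall_ne_eq_lintegral _ c fun i => measurableSet_lt (by fun_prop) (by fun_prop),
    lintegral_congr_ae hslice,
    lintegral_exp_neg_mul_expMeasure hr (Finset.sum_nonneg fun i _ => ha i)]

end Race

section Argmin

variable {C : Type*}

def IsStrictArgminDiv (w ω : C → ℝ) (d : C) : Prop :=
  0 < w d ∧ ∀ i, 0 < w i → i ≠ d → ω d / w d < ω i / w i

lemma IsStrictArgminDiv.eq_iff {w ω : C → ℝ} {d c : C} (hd : IsStrictArgminDiv w ω d)
    (hω : ∀ i, 0 < ω i) (hw : ∀ i, 0 ≤ w i) (hc : 0 < w c) :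
    d = c ↔ ∀ i ≠ c, w i / w c * ω c < ω i := by
  have hdiv {i} (hi : 0 < w i) : w i / w c * ω c < ω i ↔ ω c / w c < ω i / w i := by
    rw [div_mul_eq_mul_div, div_lt_iff₀ hc, div_lt_div_iff₀ hc hi, mul_comm (w i)]
  constructor
  · rintro rfl i hic
    rcases (hw i).eq_or_lt with hi | hi
    · rw [← hi, zero_div, zero_mul]
      exact hω i
    · exact (hdiv hi).2 (hd.2 i hi hic)
  · intro h
    by_contra hdc
    exact (hd.2 c hc (Ne.symm hdc)).not_gt ((hdiv hd.1).1 (h d hdc))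

lemma setOf_eq_ae_eq_of_isStrictArgminDiv {μ : Measure (C → ℝ)}
    (hω : ∀ᵐ ω ∂μ, ∀ i, 0 < ω i) {w : C → ℝ} (hw : ∀ i, 0 ≤ w i) {D : (C → ℝ) → C}
    (hD : ∀ᵐ ω ∂μ, IsStrictArgminDiv w ω (D ω)) {c : C} (hc : 0 < w c) :
    {ω | D ω = c} =ᵐ[μ] {ω | ∀ i ≠ c, w i / w c * ω c < ω i} := by
  filter_upwards [hω, hD] with ω hω hd
  exact propext (hd.eq_iff hω hw hc)

lemma nullMeasurableSet_setOf_eq_of_isStrictArgminDiv [Fintype C] {μ : Measure (C → ℝ)}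
    (hω : ∀ᵐ ω ∂μ, ∀ i, 0 < ω i) {w : C → ℝ} (hw : ∀ i, 0 ≤ w i)
    {D : (C → ℝ) → C} (hD : ∀ᵐ ω ∂μ, IsStrictArgminDiv w ω (D ω)) {c : C} (hc : 0 < w c) :
    NullMeasurableSet {ω | D ω = c} μ :=
  (measurableSet_forall_ne_mul_lt c _).nullMeasurableSet.congr
    (setOf_eq_ae_eq_of_isStrictArgminDiv hω hw hD hc).symm

variable [Fintype C] {r : ℝ}

lemma measure_pi_expMeasure_isStrictArgminDiv_eq (hr : 0 < r) {w : C → ℝ}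
    (hw : ∀ i, 0 ≤ w i) (hw1 : ∑ i, w i = 1) {D : (C → ℝ) → C}
    (hD : ∀ᵐ ω ∂Measure.pi fun _ : C => expMeasure r, IsStrictArgminDiv w ω (D ω))
    (c : C) :
    Measure.pi (fun _ : C => expMeasure r) {ω | D ω = c} = ENNReal.ofReal (w c) := by
  rcases (hw c).eq_or_lt with hc | hc
  · rw [← hc, ENNReal.ofReal_zero]
    refine measure_eq_zero_iff_ae_notMem.2 ?_
    filter_upwards [hD] with ω hd hdc
    exact hd.1.ne' (hdc ▸ hc.symm)
  · rw [measure_congr (setOf_eq_ae_eq_of_isStrictArgminDiv (ae_pos_pi_expMeasure hr) hw hD hc),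
      measure_pi_expMeasure_forall_ne_mul_lt hr c fun i => div_nonneg (hw i) hc.le,
      ← Finset.sum_div, Finset.sum_erase_eq_sub (mem_univ c), hw1]
    congr 1
    field_simp
    ring

lemma ofReal_le_measure_pi_expMeasure_isStrictArgminDiv_eq_inter (hr : 0 < r) {v w : C → ℝ}
    (hv : ∀ i, 0 ≤ v i) (hv1 : ∑ i, v i = 1) (hw : ∀ i, 0 ≤ w i) (hw1 : ∑ i, w i = 1)
    {D E : (C → ℝ) → C}
    (hD : ∀ᵐ ω ∂Measure.pi fun _ : C => expMeasure r, IsStrictArgminDiv v ω (D ω))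
    (hE : ∀ᵐ ω ∂Measure.pi fun _ : C => expMeasure r, IsStrictArgminDiv w ω (E ω))
    {c : C} (hvc : 0 < v c) (hwc : 0 < w c) :
    ENNReal.ofReal (v c * (1 + v c / w c)⁻¹)
      ≤ Measure.pi (fun _ : C => expMeasure r) ({ω | D ω = c} ∩ {ω | E ω = c}) := by
  have hpos := ae_pos_pi_expMeasure (ι := C) hr
  set a : C → ℝ := fun i => max (v i / v c) (w i / w c)
  have ha (i : C) : 0 ≤ a i := le_max_of_le_left (div_nonneg (hv i) hvc.le)
  have hrace : ({ω | D ω = c} ∩ {ω | E ω = c} : Set (C → ℝ))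
      =ᵐ[Measure.pi fun _ : C => expMeasure r] {ω | ∀ i ≠ c, a i * ω c < ω i} := by
    refine ((setOf_eq_ae_eq_of_isStrictArgminDiv hpos hv hD hvc).inter
      (setOf_eq_ae_eq_of_isStrictArgminDiv hpos hw hE hwc)).trans (Filter.eventuallyEq_set.2 ?_)
    filter_upwards [hpos] with ω hω
    simp only [mem_inter_iff, mem_ofPred_eq, a, max_mul_of_nonneg _ _ (hω c).le, max_lt_iff,
      imp_and, forall_and]
  have hsum : ∑ i ∈ univ.erase c, a i ≤ (1 - v c) / v c + (1 - w c) / w c := calc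
    ∑ i ∈ univ.erase c, a i ≤ ∑ i ∈ univ.erase c, (v i / v c + w i / w c) :=
      Finset.sum_le_sum fun i _ =>
        max_le_add_of_nonneg (div_nonneg (hv i) hvc.le) (div_nonneg (hw i) hwc.le)
    _ = (1 - v c) / v c + (1 - w c) / w c := by
      rw [Finset.sum_add_distrib, ← Finset.sum_div, ← Finset.sum_div,
        Finset.sum_erase_eq_sub (mem_univ c), Finset.sum_erase_eq_sub (mem_univ c), hv1, hw1]
  rw [measure_congr hrace, measure_pi_expMeasure_forall_ne_mul_lt hr c ha]
  refine ENNReal.ofReal_le_ofReal ?_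
  rw [show v c * (1 + v c / w c)⁻¹ = (1 / v c + 1 / w c)⁻¹ by field_simp]
  refine inv_anti₀ (add_pos_of_pos_of_nonneg one_pos (Finset.sum_nonneg fun i _ => ha i)) ?_
  have : (1 - v c) / v c + (1 - w c) / w c = 1 / v c + 1 / w c - 2 := by field_simp; ring
  linarith

end Argmin

lemma cond_le_ofReal_one_sub {Ω : Type*} [MeasurableSpace Ω] {μ : Measure Ω} {s t B : Set Ω}
    (hs : NullMeasurableSet s μ) (hB : NullMeasurableSet B μ) (hBs : B ⊆ s)
    (htB : Disjoint t B) {p x : ℝ} (hp : 0 < p) (hx : 0 ≤ x) (hμs : μ s = ENNReal.ofReal p)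
    (hμB : ENNReal.ofReal (p * x) ≤ μ B) :
    μ[t | s] ≤ ENNReal.ofReal (1 - x) := by
  have hadd : μ (t ∩ s) + μ B ≤ μ s := by
    rw [← measure_union₀ hB (htB.mono_left inter_subset_left).aedisjoint]
    exact measure_mono (union_subset inter_subset_right hBs)
  have hts : μ (t ∩ s) ≤ ENNReal.ofReal p * ENNReal.ofReal (1 - x) := calc
    μ (t ∩ s) ≤ μ s - μ B :=
      ENNReal.le_sub_of_add_le_right (ne_top_of_le_ne_top (hμs ▸ ENNReal.ofReal_ne_top)
        (measure_mono hBs)) hadd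
    _ ≤ ENNReal.ofReal p - ENNReal.ofReal (p * x) := by rw [hμs]; gcongr
    _ = ENNReal.ofReal p * ENNReal.ofReal (1 - x) := by
      rw [← ENNReal.ofReal_sub _ (by positivity), ← ENNReal.ofReal_mul hp.le, mul_one_sub]
  rw [ProbabilityTheory.cond, Measure.smul_apply, Measure.restrict_apply₀' hs, smul_eq_mul, hμs]
  calc (ENNReal.ofReal p)⁻¹ * μ (t ∩ s)
      ≤ (ENNReal.ofReal p)⁻¹ * (ENNReal.ofReal p * ENNReal.ofReal (1 - x)) := by gcongr
    _ = ENNReal.ofReal (1 - x) :=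
      ENNReal.inv_mul_cancel_left (by simpa using hp) ENNReal.ofReal_ne_top

theorem stmt6_general {C : Type*} [Fintype C]
    (P Q : C → ℝ)
    (hPnn : ∀ c, 0 ≤ P c) (hP1 : ∑ c, P c = 1)
    (hQnn : ∀ c, 0 ≤ Q c) (hQ1 : ∑ c, Q c = 1)
    (CP CQ : (C → ℝ) → C)
    (hCP : ∀ᵐ ω ∂(Measure.pi fun _ : C => expMeasure 1),
        0 < P (CP ω) ∧ ∀ c, 0 < P c → c ≠ CP ω → ω (CP ω) / P (CP ω) < ω c / P c)
    (hCQ : ∀ᵐ ω ∂(Measure.pi fun _ : C => expMeasure 1),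
        0 < Q (CQ ω) ∧ ∀ c, 0 < Q c → c ≠ CQ ω → ω (CQ ω) / Q (CQ ω) < ω c / Q c) :
    (∀ c, (Measure.pi fun _ : C => expMeasure 1) {ω | CP ω = c} = ENNReal.ofReal (P c))
    ∧ ∀ c, 0 < P c → 0 < Q c →
        ProbabilityTheory.cond (Measure.pi fun _ : C => expMeasure 1)
            {ω | CP ω = c} {ω | CP ω ≠ CQ ω}
          ≤ ENNReal.ofReal (1 - (1 + P c / Q c)⁻¹) := by
  have hpos := ae_pos_pi_expMeasure (ι := C) one_pos
  have hCP_law := measure_pi_expMeasure_isStrictArgminDiv_eq one_pos hPnn hP1 hCP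
  refine ⟨hCP_law, fun c hPc hQc => ?_⟩
  have hCP_null := nullMeasurableSet_setOf_eq_of_isStrictArgminDiv hpos hPnn hCP hPc
  have hCQ_null := nullMeasurableSet_setOf_eq_of_isStrictArgminDiv hpos hQnn hCQ hQc
  refine cond_le_ofReal_one_sub hCP_null (hCP_null.inter hCQ_null) inter_subset_left ?_ hPc
    (by positivity) (hCP_law c)
    (ofReal_le_measure_pi_expMeasure_isStrictArgminDiv_eq_inter one_pos hPnn hP1 hQnn hQ1
      hCP hCQ hPc hQc)
  exact disjoint_left.2 fun ω hne hω => hne (hω.1.trans hω.2.symm)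

theorem stmt6 {C : Type*} [Fintype C] [Nonempty C]
    (P Q : C → ℝ)
    (hPnn : ∀ c, 0 ≤ P c) (hP1 : ∑ c, P c = 1)
    (hQnn : ∀ c, 0 ≤ Q c) (hQ1 : ∑ c, Q c = 1)
    (CP CQ : (C → ℝ) → C)
    (hmP : ∀ c, MeasurableSet {ω : C → ℝ | CP ω = c})
    (hmQ : ∀ c, MeasurableSet {ω : C → ℝ | CQ ω = c})
    (hCP : ∀ᵐ ω ∂(Measure.pi fun _ : C => expMeasure 1),
        0 < P (CP ω) ∧ ∀ c, 0 < P c → c ≠ CP ω → ω (CP ω) / P (CP ω) < ω c / P c)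
    (hCQ : ∀ᵐ ω ∂(Measure.pi fun _ : C => expMeasure 1),
        0 < Q (CQ ω) ∧ ∀ c, 0 < Q c → c ≠ CQ ω → ω (CQ ω) / Q (CQ ω) < ω c / Q c) :
    (∀ c, (Measure.pi fun _ : C => expMeasure 1) {ω | CP ω = c} = ENNReal.ofReal (P c))
    ∧ ∀ c, 0 < P c → 0 < Q c →
        ProbabilityTheory.cond (Measure.pi fun _ : C => expMeasure 1)
            {ω | CP ω = c} {ω | CP ω ≠ CQ ω}
          ≤ ENNReal.ofReal (1 - (1 + P c / Q c)⁻¹) :=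
  stmt6_general P Q hPnn hP1 hQnn hQ1 CP CQ hCP hCQ
end
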